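/- For every positive integer n, the number of partitions of n into distinct odd parts is equal to the number of partitions of n of the form n = h₁ + ⋯ + h_d with h₁ ≥ h₂ ≥ ⋯ ≥ h_d ≥ 1, such that h_d ≠ 2, h_i − h_{i+1} ≥ 6 for i = 1, …, d−1, and h_i − h_{i+1} ≥ 7 whenever h_{i+1} is even. -/

import Mathlib

namespace AlladiBij



/-- index of first "small" entry: number of k with l[k] ≥ 2k+1 -/
def ee (l : List ℕ) : ℕ := ((Finset.range l.length).filter fun k => 2*k+1 ≤ l.getD k 0).card

def tt (l : List ℕ) (j : ℕ) : ℕ :=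
  ((Finset.Ico (ee l) l.length).filter fun i => 2*j+1 ≤ l.getD i 0).card

def uu (L : List ℕ) (j : ℕ) : ℕ :=
  ((Finset.Ico j L.length).filter fun i => Even (L.getD i 0)).card

def fwd (l : List ℕ) : List ℕ :=
  List.ofFn fun k : Fin (ee l) =>
    l.getD k 0 + 2 * ee l + tt l k + tt l (k+1) - (4*(k:ℕ)+2)

def tail' (L : List ℕ) : List ℕ :=
  ((List.range L.length).reverse.filter fun i => decide (Even (L.getD i 0))).map fun i => 2*i+1

def bwd (L : List ℕ) : List ℕ :=
  (List.ofFn fun k : Fin L.length =>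
    L.getD k 0 + 4*(k:ℕ) + 2 - (2*L.length + uu L k + uu L (k+1))) ++ tail' L

-- basic getD facts
lemma getD_lt_of_sorted {l : List ℕ} (hs : l.Pairwise (· > ·)) {i j : ℕ}
    (hij : i < j) (hj : j < l.length) : l.getD j 0 < l.getD i 0 := by
  rw [List.getD_eq_getElem l 0 hj, List.getD_eq_getElem l 0 (lt_trans hij hj)]
  exact List.pairwise_iff_get.1 hs ⟨i, lt_trans hij hj⟩ ⟨j, hj⟩ hij

lemma getD_odd {l : List ℕ} (ho : ∀ x ∈ l, Odd x) {i : ℕ} (hi : i < l.length) :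
    l.getD i 0 % 2 = 1 := by
  rw [List.getD_eq_getElem l 0 hi]
  exact Nat.odd_iff.1 (ho _ (l.getElem_mem hi))

lemma getD_step {l : List ℕ} (hs : l.Pairwise (· > ·)) (ho : ∀ x ∈ l, Odd x) {i : ℕ}
    (hi : i + 1 < l.length) : l.getD (i+1) 0 + 2 ≤ l.getD i 0 := by
  have h1 := getD_lt_of_sorted (i := i) (j := i+1) hs (Nat.lt_add_one i) hi
  have h2 := getD_odd (i := i+1) ho hi
  have h3 := getD_odd (i := i) ho (Nat.lt_of_succ_lt hi)
  omega

-- ee characterization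
lemma ee_le (l : List ℕ) : ee l ≤ l.length := by
  classical
  calc ee l ≤ (Finset.range l.length).card := Finset.card_filter_le _ _
  _ = l.length := Finset.card_range _

lemma ee_filter_eq {l : List ℕ} (hs : l.Pairwise (· > ·)) (ho : ∀ x ∈ l, Odd x) :
    ((Finset.range l.length).filter fun k => 2*k+1 ≤ l.getD k 0) = Finset.range (ee l) := by
  classical
  set T := (Finset.range l.length).filter fun k => 2*k+1 ≤ l.getD k 0 with hT
  -- downward closed, adjacent
  have adj : ∀ k, k + 1 ∈ T → k ∈ T := by
    intro k hk1
    simp only [hT, Finset.mem_filter, Finset.mem_range] at hk1 ⊢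
    obtain ⟨h1, h2⟩ := hk1
    have := getD_step hs ho h1
    exact ⟨by omega, by omega⟩
  have down : ∀ m k, k ∈ T → k - m ∈ T := by
    intro m
    induction m with
    | zero => simp only [Nat.sub_zero]; exact fun k h => h
    | succ m ih =>
      intro k hk
      rcases le_or_gt k m with h | h
      · have : k - (m+1) = k - m := by omega
        rw [this]; exact ih k hk
      · have : k - (m+1) + 1 = k - m := by omega
        exact adj _ (by rw [this]; exact ih k hk)
  have hsub : T ⊆ Finset.range T.card := by
    intro x hx
    rw [Finset.mem_range]
    by_contra hcon
    push_neg at hcon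
    have : Finset.range (x+1) ⊆ T := by
      intro i hi
      rw [Finset.mem_range] at hi
      have : i = x - (x - i) := by omega
      rw [this]; exact down _ _ hx
    have := Finset.card_le_card this
    rw [Finset.card_range] at this
    omega
  have h4 := Finset.eq_of_subset_of_card_le hsub (by rw [Finset.card_range])
  rw [h4, hT] at *
  rfl

lemma ee_char {l : List ℕ} (hs : l.Pairwise (· > ·)) (ho : ∀ x ∈ l, Odd x) {k : ℕ}
    (hk : k < l.length) : (2*k+1 ≤ l.getD k 0) ↔ k < ee l := by
  classical
  constructor
  · intro h
    have : k ∈ (Finset.range l.length).filter fun k => 2*k+1 ≤ l.getD k 0 :=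
      Finset.mem_filter.mpr ⟨Finset.mem_range.mpr hk, h⟩
    rw [ee_filter_eq hs ho] at this
    simpa using this
  · intro h
    have : k ∈ Finset.range (ee l) := by simpa using h
    rw [← ee_filter_eq hs ho] at this
    simp only [Finset.mem_filter] at this
    exact this.2



/-- number of indices in [ee l, l.length) whose entry equals 2j+1 -/
def cnt (l : List ℕ) (j : ℕ) : ℕ :=
  ((Finset.Ico (ee l) l.length).filter fun i => l.getD i 0 = 2*j+1).card

lemma tt_antitone (l : List ℕ) (j : ℕ) : tt l (j+1) ≤ tt l j := by
  apply Finset.card_le_card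
  intro i hi
  rw [Finset.mem_filter] at hi ⊢
  exact ⟨hi.1, by omega⟩

section Forward

variable {l : List ℕ} (hs : l.Pairwise (· > ·)) (ho : ∀ x ∈ l, Odd x)
include hs ho

lemma two_k_le {k : ℕ} (hk : k < ee l) : 2*k+1 ≤ l.getD k 0 :=
  (ee_char hs ho (lt_of_lt_of_le hk (ee_le l))).2 hk

lemma small_tail {i : ℕ} (hi : ee l ≤ i) (hid : i < l.length) :
    l.getD i 0 < 2 * ee l + 1 := by
  rcases eq_or_lt_of_le hi with h | h
  · rw [← h] at hid ⊢
    by_contra hcon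
    push_neg at hcon
    have := (ee_char hs ho hid).1 (by omega)
    omega
  · have h1 : l.getD i 0 < l.getD (ee l) 0 := getD_lt_of_sorted hs h hid
    have h2 : ¬ (2 * ee l + 1 ≤ l.getD (ee l) 0) := by
      intro hcon
      exact absurd ((ee_char hs ho (lt_of_le_of_lt hi hid)).1 hcon) (lt_irrefl _)
    omega

lemma tt_ee_eq_zero : tt l (ee l) = 0 := by
  rw [tt, Finset.card_eq_zero, Finset.filter_eq_empty_iff]
  intro i hi
  rw [Finset.mem_Ico] at hi
  have := small_tail hs ho hi.1 hi.2
  omega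

omit hs in
lemma tt_rec (j : ℕ) : tt l j = tt l (j+1) + cnt l j := by
  rw [tt, tt, cnt, Finset.card_filter, Finset.card_filter, Finset.card_filter,
    ← Finset.sum_add_distrib]
  apply Finset.sum_congr rfl
  intro i hi
  rw [Finset.mem_Ico] at hi
  have hodd := getD_odd (i := i) ho hi.2
  split_ifs <;> omega

omit ho in
lemma cnt_le_one (j : ℕ) : cnt l j ≤ 1 := by
  rw [cnt, Finset.card_le_one]
  intro a ha b hb
  rw [Finset.mem_filter, Finset.mem_Ico] at ha hb
  by_contra hne
  rcases lt_or_gt_of_ne hne with h | h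
  · have := getD_lt_of_sorted hs h hb.1.2; omega
  · have := getD_lt_of_sorted hs h ha.1.2; omega

lemma fwd_le {k : ℕ} (hk : k < ee l) :
    4*k+2 ≤ l.getD k 0 + 2 * ee l + tt l k + tt l (k+1) := by
  have := two_k_le hs ho hk
  omega

lemma fwd_getD {k : ℕ} (hk : k < ee l) :
    (fwd l).getD k 0 + (4*k+2) = l.getD k 0 + 2 * ee l + tt l k + tt l (k+1) := by
  have hlen : k < (fwd l).length := by rw [fwd, List.length_ofFn]; exact hk
  rw [List.getD_eq_getElem _ 0 hlen]
  simp only [fwd, List.getElem_ofFn]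
  exact Nat.sub_add_cancel (fwd_le hs ho hk)

lemma fwd_parity {k : ℕ} (hk : k < ee l) :
    Even ((fwd l).getD k 0) ↔ cnt l k = 1 := by
  have h1 := fwd_getD hs ho hk
  have h2 := tt_rec ho (l := l) k
  have h3 := cnt_le_one hs (l := l) k
  have h4 := getD_odd (i := k) ho (lt_of_lt_of_le hk (ee_le l))
  rw [Nat.even_iff]
  omega

lemma fwd_gap {k : ℕ} (hk : k + 1 < ee l) :
    (fwd l).getD (k+1) 0 + 6 + (if Even ((fwd l).getD (k+1) 0) then 1 else 0)
      ≤ (fwd l).getD k 0 := by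
  have h1 := fwd_getD hs ho (lt_trans (Nat.lt_succ_self k) hk)
  have h2 := fwd_getD hs ho hk
  have h3 := getD_step hs ho (i := k) (lt_of_lt_of_le hk (ee_le l))
  have h4 := tt_antitone l k
  have h5 := tt_antitone l (k+1)
  have h6 := tt_rec ho (l := l) (k+1)
  have h7 := fwd_parity hs ho hk
  split_ifs with h
  · have h8 := (fwd_parity (k := k+1) hs ho hk).1 h
    omega
  · omega

lemma fwd_pos {k : ℕ} (hk : k < ee l) : 1 ≤ (fwd l).getD k 0 := by
  have h1 := fwd_getD hs ho hk
  have h2 := two_k_le hs ho hk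
  omega

lemma fwd_last_ne_two (he : 1 ≤ ee l) : (fwd l).getD (ee l - 1) 0 ≠ 2 := by
  intro hcon
  have hk : ee l - 1 < ee l := by omega
  have h1 := fwd_getD hs ho hk
  have h2 := two_k_le hs ho hk
  have h3 : ee l - 1 + 1 = ee l := by omega
  have h4 := tt_ee_eq_zero hs ho
  have h5 := tt_rec ho (l := l) (ee l - 1)
  have h6 := cnt_le_one hs (l := l) (ee l - 1)
  have h7 := getD_odd (i := ee l - 1) ho (lt_of_lt_of_le hk (ee_le l))
  rw [h3] at h1 h5
  rcases Nat.eq_zero_or_pos (cnt l (ee l - 1)) with h8 | h8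
  · omega
  · have h10 : ((Finset.Ico (ee l) l.length).filter fun i => l.getD i 0 = 2*(ee l - 1)+1).Nonempty := by
      rw [← Finset.card_pos, ← cnt]
      omega
    obtain ⟨i, hi⟩ := h10
    rw [Finset.mem_filter, Finset.mem_Ico] at hi
    have h11 : l.getD i 0 < l.getD (ee l - 1) 0 :=
      getD_lt_of_sorted hs (by omega) hi.1.2
    omega

end Forward


lemma list_sum_getD (l : List ℕ) : l.sum = ∑ i ∈ Finset.range l.length, l.getD i 0 := by
  induction l with
  | nil => simp
  | cons x xs ih =>
    rw [List.sum_cons, List.length_cons, Finset.sum_range_succ']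
    simp only [List.getD_cons_succ, List.getD_cons_zero]
    rw [ih]
    omega

lemma sum_4k2 (e : ℕ) : ∑ k ∈ Finset.range e, (4*k+2) = 2*e*e := by
  induction e with
  | zero => simp
  | succ e ih => rw [Finset.sum_range_succ, ih]; ring

section ForwardSum

variable {l : List ℕ} (hs : l.Pairwise (· > ·)) (ho : ∀ x ∈ l, Odd x)
include hs ho

lemma tt_sum :
    ∑ k ∈ Finset.range (ee l), (tt l k + tt l (k+1))
      = ∑ i ∈ Finset.Ico (ee l) l.length, l.getD i 0 := by
  have h1 : ∀ j : ℕ, tt l j = ∑ i ∈ Finset.Ico (ee l) l.length,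
      (if 2*j+1 ≤ l.getD i 0 then 1 else 0) := by
    intro j; rw [tt, Finset.card_filter]
  calc ∑ k ∈ Finset.range (ee l), (tt l k + tt l (k+1))
      = ∑ k ∈ Finset.range (ee l), ∑ i ∈ Finset.Ico (ee l) l.length,
          ((if 2*k+1 ≤ l.getD i 0 then 1 else 0) + (if 2*(k+1)+1 ≤ l.getD i 0 then 1 else 0)) := by
        apply Finset.sum_congr rfl; intro k _
        rw [h1 k, h1 (k+1), ← Finset.sum_add_distrib]
    _ = ∑ i ∈ Finset.Ico (ee l) l.length, ∑ k ∈ Finset.range (ee l),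
          ((if 2*k+1 ≤ l.getD i 0 then 1 else 0) + (if 2*(k+1)+1 ≤ l.getD i 0 then 1 else 0)) :=
        Finset.sum_comm
    _ = ∑ i ∈ Finset.Ico (ee l) l.length, l.getD i 0 := by
        apply Finset.sum_congr rfl
        intro i hi
        rw [Finset.mem_Ico] at hi
        have hv1 := small_tail hs ho hi.1 hi.2
        have hv2 := getD_odd (i := i) ho hi.2
        set v := l.getD i 0 with hv
        rw [Finset.sum_add_distrib]
        have e1 : ∑ k ∈ Finset.range (ee l), (if 2*k+1 ≤ v then 1 else 0) = (v+1)/2 := by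
          rw [← Finset.card_filter]
          have : (Finset.range (ee l)).filter (fun k => 2*k+1 ≤ v) = Finset.range ((v+1)/2) := by
            ext k
            simp only [Finset.mem_filter, Finset.mem_range]
            omega
          rw [this, Finset.card_range]
        have e2 : ∑ k ∈ Finset.range (ee l), (if 2*(k+1)+1 ≤ v then 1 else 0) = (v-1)/2 := by
          rw [← Finset.card_filter]
          have : (Finset.range (ee l)).filter (fun k => 2*(k+1)+1 ≤ v) = Finset.range ((v-1)/2) := by
            ext k
            simp only [Finset.mem_filter, Finset.mem_range]
            omega
          rw [this, Finset.card_range]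
        rw [e1, e2]
        omega

lemma fwd_sum : (fwd l).sum = l.sum := by
  have hlen : (fwd l).length = ee l := by rw [fwd, List.length_ofFn]
  have h0 : (fwd l).sum = ∑ k ∈ Finset.range (ee l), (fwd l).getD k 0 := by
    rw [list_sum_getD, hlen]
  have h1 : ∑ k ∈ Finset.range (ee l), ((fwd l).getD k 0 + (4*k+2))
      = ∑ k ∈ Finset.range (ee l), (l.getD k 0 + 2 * ee l + tt l k + tt l (k+1)) := by
    apply Finset.sum_congr rfl
    intro k hk
    exact fwd_getD hs ho (Finset.mem_range.1 hk)
  rw [Finset.sum_add_distrib, sum_4k2] at h1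
  have h2 : ∑ k ∈ Finset.range (ee l), (l.getD k 0 + 2 * ee l + tt l k + tt l (k+1))
      = ∑ k ∈ Finset.range (ee l), l.getD k 0 + 2 * ee l * ee l
        + ∑ k ∈ Finset.range (ee l), (tt l k + tt l (k+1)) := by
    have hc : ∀ k, l.getD k 0 + 2 * ee l + tt l k + tt l (k+1)
        = l.getD k 0 + (2 * ee l + (tt l k + tt l (k+1))) := by intro k; ring
    simp only [hc]
    rw [Finset.sum_add_distrib, Finset.sum_add_distrib, Finset.sum_const, Finset.card_range]
    ring
  have h3 := tt_sum hs ho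
  have h4 : ∑ k ∈ Finset.range (ee l), l.getD k 0 + ∑ i ∈ Finset.Ico (ee l) l.length, l.getD i 0
      = l.sum := by
    rw [list_sum_getD, Finset.range_eq_Ico, Finset.range_eq_Ico]
    exact Finset.sum_Ico_consecutive (fun i => l.getD i 0) (Nat.zero_le _) (ee_le l)
  omega

end ForwardSum


lemma sum_map_filter (g : ℕ → ℕ) (p : ℕ → Bool) (l : List ℕ) :
    ((l.filter p).map g).sum = (l.map fun i => if p i then g i else 0).sum := by
  induction l with
  | nil => simp
  | cons x xs ih =>
    by_cases h : p x
    · simp [List.filter_cons, h, ih]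
    · simp [List.filter_cons, h, ih]

lemma sum_map_range (g : ℕ → ℕ) (n : ℕ) :
    ((List.range n).map g).sum = ∑ i ∈ Finset.range n, g i := by
  induction n with
  | zero => simp
  | succ n ih => rw [List.range_succ, List.map_append, List.sum_append, ih,
      Finset.sum_range_succ]; simp

section Backward

variable {L : List ℕ}
  (hLpos : ∀ x ∈ L, 1 ≤ x)
  (hLgap : L.Chain' (fun a b => b + 6 ≤ a ∧ (Even b → b + 7 ≤ a)))
  (hLlast : L.getLast? ≠ some 2)

omit hLpos hLlast in
include hLgap in
lemma gap_getD {k : ℕ} (hk : k + 1 < L.length) :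
    L.getD (k+1) 0 + 6 + (if Even (L.getD (k+1) 0) then 1 else 0) ≤ L.getD k 0 := by
  have h := List.isChain_iff_getElem.1 hLgap k (by omega)
  rw [List.getD_eq_getElem _ _ hk, List.getD_eq_getElem _ _ (by omega : k < L.length)]
  split_ifs with he
  · have := h.2 he; omega
  · exact h.1

omit hLgap in
include hLpos hLlast in
lemma last_facts (hL : L ≠ []) :
    1 ≤ L.getD (L.length - 1) 0 ∧ L.getD (L.length - 1) 0 ≠ 2 := by
  have h1 : L.length - 1 < L.length := by
    cases L; simp at hL; simp
  constructor
  · exact hLpos _ (by rw [List.getD_eq_getElem _ _ h1]; exact L.getElem_mem h1)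
  · intro hcon
    apply hLlast
    rw [List.getLast?_eq_getElem?, List.getElem?_eq_getElem h1, ← List.getD_eq_getElem L 0 h1, hcon]

lemma uu_zero {j : ℕ} (hj : L.length ≤ j) : uu L j = 0 := by
  rw [uu, Finset.card_eq_zero, Finset.filter_eq_empty_iff]
  intro i hi
  rw [Finset.mem_Ico] at hi
  omega

lemma uu_rec {j : ℕ} (hj : j < L.length) :
    uu L j = uu L (j+1) + (if Even (L.getD j 0) then 1 else 0) := by
  rw [uu, uu, Finset.card_filter, Finset.card_filter,
    Finset.sum_eq_sum_Ico_succ_bot hj]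
  omega

lemma uu_bound (j : ℕ) : uu L j ≤ L.length - j := by
  calc uu L j ≤ (Finset.Ico j L.length).card := Finset.card_filter_le _ _
  _ = L.length - j := Nat.card_Ico _ _

include hLpos hLgap hLlast in
lemma Qstrong : ∀ k, k < L.length →
    2*L.length + uu L k + uu L (k+1) + (2*k+1) ≤ L.getD k 0 + 4*k + 2 := by
  have hmain : ∀ m k, k < L.length → L.length - 1 - k = m →
      2*L.length + uu L k + uu L (k+1) + (2*k+1) ≤ L.getD k 0 + 4*k + 2 := by
    intro m
    induction m with
    | zero =>
      intro k hk hm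
      have hk1 : k = L.length - 1 := by omega
      have hL : L ≠ [] := by intro h; rw [h] at hk; simp at hk
      obtain ⟨hp, hne⟩ := last_facts hLpos hLlast hL
      rw [← hk1] at hp hne
      have h0 : uu L (k+1) = 0 := uu_zero (by omega)
      have h1 := uu_rec (L := L) (j := k) (by omega)
      rw [h0] at h1 ⊢
      by_cases he : Even (L.getD k 0)
      · rw [if_pos he] at h1
        rw [Nat.even_iff] at he
        omega
      · rw [if_neg he] at h1
        omega
    | succ m ih =>
      intro k hk hm
      have hk1 : k + 1 < L.length := by omega
      have hIH := ih (k+1) hk1 (by omega)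
      have hgap := gap_getD hLgap hk1
      have h1 := uu_rec (L := L) (j := k) (by omega)
      have h2 := uu_rec (L := L) (j := k+1) hk1
      by_cases he1 : Even (L.getD (k+1) 0) <;>
        by_cases he0 : Even (L.getD k 0) <;>
        simp only [he1, he0, if_pos, if_neg, not_false_iff] at hgap h1 h2 <;> omega
  intro k hk
  exact hmain (L.length - 1 - k) k hk rfl

include hLpos hLgap hLlast in
lemma bwd_getD_eq {k : ℕ} (hk : k < L.length) :
    (bwd L).getD k 0 + (2*L.length + uu L k + uu L (k+1)) = L.getD k 0 + 4*k + 2 := by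
  have hlen : k < (List.ofFn fun k : Fin L.length =>
      L.getD k 0 + 4*(k:ℕ) + 2 - (2*L.length + uu L k + uu L (k+1))).length := by
    rw [List.length_ofFn]; exact hk
  rw [bwd, List.getD_append _ _ _ _ hlen, List.getD_eq_getElem _ _ hlen, List.getElem_ofFn]
  simp only [Fin.val_mk]
  exact Nat.sub_add_cancel (by have := Qstrong hLpos hLgap hLlast k hk; omega)

include hLpos hLgap hLlast in
lemma bwd_ge {k : ℕ} (hk : k < L.length) : 2*k+1 ≤ (bwd L).getD k 0 := by
  have h1 := bwd_getD_eq hLpos hLgap hLlast hk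
  have h2 := Qstrong hLpos hLgap hLlast k hk
  omega

include hLpos hLgap hLlast in
lemma bwd_odd {k : ℕ} (hk : k < L.length) : (bwd L).getD k 0 % 2 = 1 := by
  have h1 := bwd_getD_eq hLpos hLgap hLlast hk
  have h2 := uu_rec (L := L) (j := k) hk
  by_cases he : Even (L.getD k 0)
  · rw [if_pos he] at h2; rw [Nat.even_iff] at he; omega
  · rw [if_neg he] at h2; rw [Nat.even_iff] at he; omega

include hLpos hLgap hLlast in
lemma bwd_strict {k : ℕ} (hk : k + 1 < L.length) :
    (bwd L).getD (k+1) 0 < (bwd L).getD k 0 := by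
  have h1 := bwd_getD_eq hLpos hLgap hLlast hk
  have h2 := bwd_getD_eq hLpos hLgap hLlast (by omega : k < L.length)
  have hgap := gap_getD hLgap hk
  have hu1 := uu_rec (L := L) (j := k) (by omega)
  have hu2 := uu_rec (L := L) (j := k+1) hk
  by_cases he1 : Even (L.getD (k+1) 0) <;>
    by_cases he0 : Even (L.getD k 0) <;>
    simp only [he1, he0, if_pos, if_neg, not_false_iff] at hgap hu1 hu2 <;> omega

include hLpos hLgap hLlast in
lemma bwd_mono {i k : ℕ} (hik : i ≤ k) (hk : k < L.length) :
    (bwd L).getD k 0 ≤ (bwd L).getD i 0 := by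
  induction k with
  | zero => have : i = 0 := by omega
            rw [this]
  | succ k ihk =>
    rcases Nat.lt_or_ge i (k+1) with h | h
    · have h1 := bwd_strict hLpos hLgap hLlast hk
      have h2 := ihk (by omega) (by omega)
      omega
    · have : i = k+1 := by omega
      rw [this]

end Backward


section BackTail

variable {L : List ℕ}

lemma tail_mem {x : ℕ} :
    x ∈ tail' L ↔ ∃ i, i < L.length ∧ Even (L.getD i 0) ∧ x = 2*i+1 := by
  simp only [tail', List.mem_map, List.mem_filter, List.mem_reverse, List.mem_range,
    decide_eq_true_eq]
  constructor
  · rintro ⟨i, ⟨h1, h2⟩, h3⟩; exact ⟨i, h1, h2, h3.symm⟩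
  · rintro ⟨i, h1, h2, h3⟩; exact ⟨i, ⟨h1, h2⟩, h3.symm⟩

lemma tail_pairwise : (tail' L).Pairwise (· > ·) := by
  have h1 : ((List.range L.length).reverse.filter fun i => decide (Even (L.getD i 0))).Pairwise
      (· > ·) := by
    apply List.Pairwise.filter
    rw [List.pairwise_reverse]
    exact List.pairwise_lt_range
  exact h1.map _ (fun a b hab => by omega)

variable (hLpos : ∀ x ∈ L, 1 ≤ x)
  (hLgap : L.Chain' (fun a b => b + 6 ≤ a ∧ (Even b → b + 7 ≤ a)))
  (hLlast : L.getLast? ≠ some 2)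

include hLpos hLgap hLlast in
lemma tail_lt_bwd {x : ℕ} (hx : x ∈ tail' L) {k : ℕ} (hk : k < L.length) :
    x < (bwd L).getD k 0 := by
  obtain ⟨i, hi, hev, hxe⟩ := tail_mem.1 hx
  have he1 : L.length - 1 < L.length := by omega
  have hmono := bwd_mono hLpos hLgap hLlast (by omega : k ≤ L.length - 1) he1
  rcases eq_or_lt_of_le (by omega : i ≤ L.length - 1) with h | h
  · -- i = length - 1, Even last entry
    have hL : L ≠ [] := by intro hcon; rw [hcon] at hi; simp at hi
    obtain ⟨hp, hne⟩ := last_facts hLpos hLlast hL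
    have heq := bwd_getD_eq hLpos hLgap hLlast he1
    have hu0 : uu L L.length = 0 := uu_zero (by omega)
    have hur := uu_rec (L := L) (j := L.length - 1) he1
    rw [← h] at hp hne hur
    rw [if_pos hev] at hur
    rw [Nat.even_iff] at hev
    have h4 : 4 ≤ L.getD i 0 := by omega
    have hbr1 : uu L (L.length - 1) = uu L i := by rw [h]
    have hbr2 : uu L (i + 1) = uu L L.length := by
      rw [h, show L.length - 1 + 1 = L.length from by omega]
    have hbr3 : uu L (L.length - 1 + 1) = uu L L.length := by
      rw [show L.length - 1 + 1 = L.length from by omega]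
    have hbr4 : L.getD (L.length - 1) 0 = L.getD i 0 := by rw [h]
    omega
  · have := bwd_ge hLpos hLgap hLlast he1
    omega

include hLpos hLgap hLlast in
lemma bwd_pairwise : (bwd L).Pairwise (· > ·) := by
  rw [bwd, List.pairwise_append]
  refine ⟨?_, ?_, ?_⟩
  · rw [List.pairwise_iff_getElem]
    intro i j hi hj hij
    rw [List.length_ofFn] at hi hj
    have g1 : ∀ m (hm : m < L.length), (List.ofFn fun k : Fin L.length =>
        L.getD k 0 + 4*(k:ℕ) + 2 - (2*L.length + uu L k + uu L (k+1)))[m]'(by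
          rw [List.length_ofFn]; exact hm) = (bwd L).getD m 0 := by
      intro m hm
      have hlen : m < (List.ofFn fun k : Fin L.length =>
          L.getD k 0 + 4*(k:ℕ) + 2 - (2*L.length + uu L k + uu L (k+1))).length := by
        rw [List.length_ofFn]; exact hm
      rw [bwd, List.getD_append _ _ _ _ hlen, List.getD_eq_getElem _ _ hlen]
    rw [g1 i hi, g1 j hj]
    have h1 := bwd_strict hLpos hLgap hLlast (k := j - 1) (by omega)
    have h2 := bwd_mono hLpos hLgap hLlast (by omega : i ≤ j - 1) (by omega : j - 1 < L.length)
    have : j - 1 + 1 = j := by omega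
    rw [this] at h1
    omega
  · exact tail_pairwise
  · intro a ha b hb
    rw [List.mem_ofFn] at ha
    obtain ⟨k, hk⟩ := ha
    have hlen : (k : ℕ) < (List.ofFn fun k : Fin L.length =>
        L.getD k 0 + 4*(k:ℕ) + 2 - (2*L.length + uu L k + uu L (k+1))).length := by
      rw [List.length_ofFn]; exact k.2
    have ha' : a = (bwd L).getD k 0 := by
      rw [bwd, List.getD_append _ _ _ _ hlen, List.getD_eq_getElem _ _ hlen, List.getElem_ofFn]
      rw [← hk]
    rw [ha']
    exact tail_lt_bwd hLpos hLgap hLlast hb k.2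

include hLpos hLgap hLlast in
lemma bwd_odd_mem : ∀ x ∈ bwd L, Odd x := by
  intro x hx
  rw [bwd, List.mem_append] at hx
  rcases hx with hx | hx
  · rw [List.mem_ofFn] at hx
    obtain ⟨k, hk⟩ := hx
    have hlen : (k : ℕ) < (List.ofFn fun k : Fin L.length =>
        L.getD k 0 + 4*(k:ℕ) + 2 - (2*L.length + uu L k + uu L (k+1))).length := by
      rw [List.length_ofFn]; exact k.2
    have ha' : x = (bwd L).getD k 0 := by
      rw [bwd, List.getD_append _ _ _ _ hlen, List.getD_eq_getElem _ _ hlen, List.getElem_ofFn]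
      rw [← hk]
    rw [ha', Nat.odd_iff]
    exact bwd_odd hLpos hLgap hLlast k.2
  · obtain ⟨i, _, _, hxe⟩ := tail_mem.1 hx
    exact ⟨i, by omega⟩

omit hLpos hLgap hLlast in
lemma uu_eq_range (k : ℕ) : uu L k
    = ∑ i ∈ Finset.range L.length, (if k ≤ i ∧ Even (L.getD i 0) then 1 else 0) := by
  rw [uu, ← Finset.card_filter]
  congr 1
  ext i
  simp only [Finset.mem_filter, Finset.mem_Ico, Finset.mem_range]
  tauto

omit hLpos hLgap hLlast in
lemma tail_sum : (tail' L).sum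
    = ∑ i ∈ Finset.range L.length, (if Even (L.getD i 0) then 2*i+1 else 0) := by
  rw [tail']
  rw [show ((List.range L.length).reverse.filter fun i => decide (Even (L.getD i 0)))
      = ((List.range L.length).filter fun i => decide (Even (L.getD i 0))).reverse from
    List.filter_reverse, List.map_reverse, List.sum_reverse]
  rw [sum_map_filter]
  rw [show (List.map (fun i => if (decide (Even (L.getD i 0))) then 2*i+1 else 0)
      (List.range L.length))
      = (List.map (fun i => if Even (L.getD i 0) then 2*i+1 else 0) (List.range L.length)) by
    apply List.map_congr_left; intro i _; simp [decide_eq_true_eq]]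
  exact sum_map_range _ _

omit hLpos hLgap hLlast in
lemma uu_sum : ∑ k ∈ Finset.range L.length, (uu L k + uu L (k+1)) = (tail' L).sum := by
  rw [tail_sum]
  calc ∑ k ∈ Finset.range L.length, (uu L k + uu L (k+1))
      = ∑ k ∈ Finset.range L.length, ∑ i ∈ Finset.range L.length,
          ((if k ≤ i ∧ Even (L.getD i 0) then 1 else 0)
            + (if k+1 ≤ i ∧ Even (L.getD i 0) then 1 else 0)) := by
        apply Finset.sum_congr rfl; intro k _
        rw [uu_eq_range k, uu_eq_range (k+1), ← Finset.sum_add_distrib]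
    _ = ∑ i ∈ Finset.range L.length, ∑ k ∈ Finset.range L.length,
          ((if k ≤ i ∧ Even (L.getD i 0) then 1 else 0)
            + (if k+1 ≤ i ∧ Even (L.getD i 0) then 1 else 0)) := Finset.sum_comm
    _ = ∑ i ∈ Finset.range L.length, (if Even (L.getD i 0) then 2*i+1 else 0) := by
        apply Finset.sum_congr rfl
        intro i hi
        rw [Finset.mem_range] at hi
        rw [Finset.sum_add_distrib]
        by_cases he : Even (L.getD i 0)
        · simp only [he, and_true, if_pos]
          have e1 : ∑ k ∈ Finset.range L.length, (if k ≤ i then 1 else 0) = i+1 := by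
            rw [← Finset.card_filter]
            rw [show (Finset.range L.length).filter (fun k => k ≤ i) = Finset.range (i+1) by
              ext k; simp only [Finset.mem_filter, Finset.mem_range]; omega]
            rw [Finset.card_range]
          have e2 : ∑ k ∈ Finset.range L.length, (if k+1 ≤ i then 1 else 0) = i := by
            rw [← Finset.card_filter]
            rw [show (Finset.range L.length).filter (fun k => k+1 ≤ i) = Finset.range i by
              ext k; simp only [Finset.mem_filter, Finset.mem_range]; omega]
            rw [Finset.card_range]
          rw [e1, e2]
          omega
        · simp only [he, and_false, if_neg, not_false_iff]
          simp
  
include hLpos hLgap hLlast in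
lemma bwd_sum : (bwd L).sum = L.sum := by
  set P := (List.ofFn fun k : Fin L.length =>
    L.getD k 0 + 4*(k:ℕ) + 2 - (2*L.length + uu L k + uu L (k+1))) with hP
  have hPlen : P.length = L.length := by rw [hP, List.length_ofFn]
  have hPget : ∀ m, m < L.length → P.getD m 0 = (bwd L).getD m 0 := by
    intro m hm
    have hlen : m < P.length := by rw [hPlen]; exact hm
    rw [bwd, ← hP, List.getD_append _ _ _ _ hlen]
  have h0 : (bwd L).sum = P.sum + (tail' L).sum := by
    rw [bwd, ← hP, List.sum_append]
  have h1 : P.sum = ∑ k ∈ Finset.range L.length, (bwd L).getD k 0 := by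
    rw [list_sum_getD, hPlen]
    apply Finset.sum_congr rfl
    intro k hk
    exact hPget k (Finset.mem_range.1 hk)
  have h2 : ∑ k ∈ Finset.range L.length, ((bwd L).getD k 0 + (2*L.length + uu L k + uu L (k+1)))
      = ∑ k ∈ Finset.range L.length, (L.getD k 0 + 4*k + 2) := by
    apply Finset.sum_congr rfl
    intro k hk
    exact bwd_getD_eq hLpos hLgap hLlast (Finset.mem_range.1 hk)
  have h3 : ∑ k ∈ Finset.range L.length, ((bwd L).getD k 0 + (2*L.length + uu L k + uu L (k+1)))
      = ∑ k ∈ Finset.range L.length, (bwd L).getD k 0 + 2*L.length*L.length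
        + ∑ k ∈ Finset.range L.length, (uu L k + uu L (k+1)) := by
    rw [show (fun k => (bwd L).getD k 0 + (2*L.length + uu L k + uu L (k+1)))
        = (fun k => (bwd L).getD k 0 + (2*L.length + (uu L k + uu L (k+1)))) by
      funext k; ring]
    rw [Finset.sum_add_distrib, Finset.sum_add_distrib, Finset.sum_const, Finset.card_range,
      smul_eq_mul]
    ring
  have h4 : ∑ k ∈ Finset.range L.length, (L.getD k 0 + 4*k + 2)
      = L.sum + 2*L.length*L.length := by
    rw [show (fun k => L.getD k 0 + 4*k + 2) = (fun k => L.getD k 0 + (4*k + 2)) by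
      funext k; ring]
    rw [Finset.sum_add_distrib, sum_4k2, list_sum_getD]
  have h5 := uu_sum (L := L)
  omega

end BackTail


lemma fwd_getD_bridge {l : List ℕ} {k : ℕ} (hk : k < ee l) :
    (fwd l).getD k 0 = l.getD k 0 + 2 * ee l + tt l k + tt l (k+1) - (4*k+2) := by
  have hlen : k < (fwd l).length := by rw [fwd, List.length_ofFn]; exact hk
  rw [List.getD_eq_getElem _ _ hlen]
  simp only [fwd, List.getElem_ofFn]

section MapsToB

variable {l : List ℕ} (hs : l.Pairwise (· > ·)) (ho : ∀ x ∈ l, Odd x)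

include hs ho in
lemma fwd_pos_mem : ∀ x ∈ fwd l, 1 ≤ x := by
  intro x hx
  rw [fwd, List.mem_ofFn] at hx
  obtain ⟨k, hk⟩ := hx
  have hkk : (k : ℕ) < ee l := k.2
  have h1 := fwd_pos hs ho hkk
  rw [fwd_getD_bridge hkk] at h1
  rw [← hk]
  exact h1

include hs ho in
lemma fwd_length : (fwd l).length = ee l := by rw [fwd, List.length_ofFn]

include hs ho in
lemma fwd_chain_ge : (fwd l).Chain' (· ≥ ·) := by
  refine List.isChain_iff_getElem.2 ?_
  intro i hi
  rw [fwd_length hs ho] at hi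
  have hgap := fwd_gap hs ho (k := i) (by omega)
  have g1 : (fwd l).get ⟨i, by rw [fwd_length hs ho]; omega⟩ = (fwd l).getD i 0 := by
    rw [List.getD_eq_getElem _ _ (by rw [fwd_length hs ho]; omega : i < (fwd l).length)]
    rfl
  have g2 : (fwd l).get ⟨i+1, by rw [fwd_length hs ho]; omega⟩ = (fwd l).getD (i+1) 0 := by
    rw [List.getD_eq_getElem _ _ (by rw [fwd_length hs ho]; omega : i+1 < (fwd l).length)]
    rfl
  simp only [List.get_eq_getElem] at g1 g2
  rw [g1, g2]
  split_ifs at hgap <;> omega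

include hs ho in
lemma fwd_chain_gap :
    (fwd l).Chain' (fun a b => b + 6 ≤ a ∧ (Even b → b + 7 ≤ a)) := by
  refine List.isChain_iff_getElem.2 ?_
  intro i hi
  rw [fwd_length hs ho] at hi
  have hgap := fwd_gap hs ho (k := i) (by omega)
  have g1 : (fwd l).get ⟨i, by rw [fwd_length hs ho]; omega⟩ = (fwd l).getD i 0 := by
    rw [List.getD_eq_getElem _ _ (by rw [fwd_length hs ho]; omega : i < (fwd l).length)]
    rfl
  have g2 : (fwd l).get ⟨i+1, by rw [fwd_length hs ho]; omega⟩ = (fwd l).getD (i+1) 0 := by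
    rw [List.getD_eq_getElem _ _ (by rw [fwd_length hs ho]; omega : i+1 < (fwd l).length)]
    rfl
  simp only [List.get_eq_getElem] at g1 g2
  rw [g1, g2]
  constructor
  · split_ifs at hgap <;> omega
  · intro he
    rw [if_pos he] at hgap
    omega

include hs ho in
lemma ee_pos (hl : l ≠ []) : 1 ≤ ee l := by
  have hlen : 0 < l.length := List.length_pos_iff.2 hl
  have h0 := getD_odd (i := 0) ho hlen
  exact (ee_char hs ho hlen).1 (by omega)

include hs ho in
lemma fwd_getLast_ne : l ≠ [] → (fwd l).getLast? ≠ some 2 := by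
  intro hl
  have he := ee_pos hs ho hl
  have hlen : (fwd l).length = ee l := fwd_length hs ho
  have h1 : (fwd l).length - 1 < (fwd l).length := by omega
  rw [List.getLast?_eq_getElem?, List.getElem?_eq_getElem h1,
    ← List.getD_eq_getElem (fwd l) 0 h1]
  intro hcon
  have h2 := fwd_last_ne_two hs ho he
  rw [← hlen] at h2
  exact h2 (by injection hcon)

end MapsToB

section RT2

variable {L : List ℕ}
  (hLpos : ∀ x ∈ L, 1 ≤ x)
  (hLgap : L.Chain' (fun a b => b + 6 ≤ a ∧ (Even b → b + 7 ≤ a)))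
  (hLlast : L.getLast? ≠ some 2)

include hLpos hLgap hLlast

lemma bwd_getD_right {k : ℕ} (hke : L.length ≤ k) :
    (bwd L).getD k 0 = (tail' L).getD (k - L.length) 0 := by
  rw [bwd, List.getD_append_right _ _ _ _ (by rw [List.length_ofFn]; exact hke)]
  rw [List.length_ofFn]

lemma ee_bwd : ee (bwd L) = L.length := by
  have hchar : ∀ k, k < (bwd L).length → ((2*k+1 ≤ (bwd L).getD k 0) ↔ k < L.length) := by
    intro k hk
    constructor
    · intro h
      by_contra hcon
      push_neg at hcon
      rw [bwd_getD_right hLpos hLgap hLlast hcon] at h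
      rcases Nat.lt_or_ge (k - L.length) (tail' L).length with hin | hout
      · have hmem : (tail' L).getD (k - L.length) 0 ∈ tail' L := by
          rw [List.getD_eq_getElem _ _ hin]
          exact (tail' L).getElem_mem hin
        obtain ⟨i, hi, _, hx⟩ := tail_mem.1 hmem
        omega
      · rw [List.getD_eq_default _ _ hout] at h
        omega
    · intro h
      exact bwd_ge hLpos hLgap hLlast h
  have hle : L.length ≤ (bwd L).length := by
    rw [bwd, List.length_append, List.length_ofFn]
    omega
  rw [ee]
  rw [show (Finset.range (bwd L).length).filter (fun k => 2*k+1 ≤ (bwd L).getD k 0)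
      = Finset.range L.length by
    ext k
    simp only [Finset.mem_filter, Finset.mem_range]
    constructor
    · rintro ⟨h1, h2⟩; exact (hchar k h1).1 h2
    · intro h; exact ⟨by omega, (hchar k (by omega)).2 h⟩]
  exact Finset.card_range _

lemma tail_mem_iff {j : ℕ} (hj : j < L.length) :
    (2*j+1) ∈ tail' L ↔ Even (L.getD j 0) := by
  rw [tail_mem]
  constructor
  · rintro ⟨i, hi, hev, hx⟩
    have : i = j := by omega
    rw [← this]; exact hev
  · intro hev; exact ⟨j, hj, hev, rfl⟩

lemma cnt_bwd {j : ℕ} (hj : j < L.length) :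
    cnt (bwd L) j = (if Even (L.getD j 0) then 1 else 0) := by
  have hsb := bwd_pairwise hLpos hLgap hLlast
  have hlenb : (bwd L).length = L.length + (tail' L).length := by
    rw [bwd, List.length_append, List.length_ofFn]
  have heb := ee_bwd hLpos hLgap hLlast
  by_cases he : Even (L.getD j 0)
  · rw [if_pos he]
    have hmem := (tail_mem_iff hLpos hLgap hLlast hj).2 he
    obtain ⟨m, hm, hx⟩ := List.mem_iff_getElem.1 hmem
    have hidx : L.length + m < (bwd L).length := by omega
    have hval : (bwd L).getD (L.length + m) 0 = 2*j+1 := by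
      rw [bwd_getD_right hLpos hLgap hLlast (by omega)]
      rw [show L.length + m - L.length = m from by omega]
      rw [List.getD_eq_getElem _ _ hm, hx]
    have hcnt1 : 0 < cnt (bwd L) j := by
      rw [cnt]
      refine Finset.card_pos.2 ⟨L.length + m, ?_⟩
      rw [Finset.mem_filter, Finset.mem_Ico, heb]
      exact ⟨⟨by omega, hidx⟩, hval⟩
    have hcnt2 := cnt_le_one hsb (l := bwd L) j
    omega
  · rw [if_neg he]
    rw [cnt, Finset.card_eq_zero, Finset.filter_eq_empty_iff]
    intro i hi
    rw [Finset.mem_Ico, heb] at hi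
    intro hval
    have hin : i - L.length < (tail' L).length := by
      rw [hlenb] at hi
      omega
    have hvm : (bwd L).getD i 0 ∈ tail' L := by
      rw [bwd_getD_right hLpos hLgap hLlast hi.1, List.getD_eq_getElem _ _ hin]
      exact (tail' L).getElem_mem hin
    rw [hval] at hvm
    exact he ((tail_mem_iff hLpos hLgap hLlast hj).1 hvm)

lemma tt_bwd_eq_uu : ∀ j, j ≤ L.length → tt (bwd L) j = uu L j := by
  have hsb := bwd_pairwise hLpos hLgap hLlast
  have hob := bwd_odd_mem hLpos hLgap hLlast
  have heb := ee_bwd hLpos hLgap hLlast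
  have hmain : ∀ m j, j ≤ L.length → L.length - j = m → tt (bwd L) j = uu L j := by
    intro m
    induction m with
    | zero =>
      intro j hj hm
      have : j = L.length := by omega
      rw [this, uu_zero (le_refl _)]
      have := tt_ee_eq_zero hsb hob
      rw [heb] at this
      exact this
    | succ m ih =>
      intro j hj hm
      have hjl : j < L.length := by omega
      have h1 := tt_rec hob (l := bwd L) j
      have h2 := cnt_bwd hLpos hLgap hLlast hjl
      have h3 := uu_rec (L := L) hjl
      have h4 := ih (j+1) (by omega) (by omega)
      omega
  intro j hj
  exact hmain (L.length - j) j hj rfl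

lemma fwd_bwd : fwd (bwd L) = L := by
  have hsb := bwd_pairwise hLpos hLgap hLlast
  have hob := bwd_odd_mem hLpos hLgap hLlast
  have heb := ee_bwd hLpos hLgap hLlast
  have hlen : (fwd (bwd L)).length = L.length := by
    rw [fwd, List.length_ofFn, heb]
  apply List.ext_getElem hlen
  intro k hk1 hk2
  rw [hlen] at hk1
  have hke : k < ee (bwd L) := by rw [heb]; exact hk1
  have h1 := fwd_getD hsb hob hke
  rw [heb] at h1
  have h2 := bwd_getD_eq hLpos hLgap hLlast hk1
  have h3 := tt_bwd_eq_uu hLpos hLgap hLlast k (by omega)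
  have h4 := tt_bwd_eq_uu hLpos hLgap hLlast (k+1) (by omega)
  rw [← List.getD_eq_getElem (fwd (bwd L)) 0 (by rw [hlen]; exact hk1),
    ← List.getD_eq_getElem L 0 hk2]
  omega

end RT2


section RT1

variable {l : List ℕ} (hs : l.Pairwise (· > ·)) (ho : ∀ x ∈ l, Odd x)

include hs ho in
lemma uu_fwd_eq_tt : ∀ j, j ≤ ee l → uu (fwd l) j = tt l j := by
  have hflen : (fwd l).length = ee l := fwd_length hs ho
  have hmain : ∀ m j, j ≤ ee l → ee l - j = m → uu (fwd l) j = tt l j := by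
    intro m
    induction m with
    | zero =>
      intro j hj hm
      have hje : j = ee l := by omega
      rw [hje, uu_zero (by rw [hflen]), tt_ee_eq_zero hs ho]
    | succ m ih =>
      intro j hj hm
      have hjl : j < ee l := by omega
      have h1 := uu_rec (L := fwd l) (j := j) (by omega)
      have h2 := fwd_parity hs ho hjl
      have h3 := tt_rec ho (l := l) j
      have h4 := cnt_le_one hs (l := l) j
      have h5 := ih (j+1) (by omega) (by omega)
      by_cases he : Even ((fwd l).getD j 0)
      · rw [if_pos he] at h1
        have := h2.1 he
        omega
      · rw [if_neg he] at h1
        have : ¬ (cnt l j = 1) := fun hc => he (h2.2 hc)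
        omega
  intro j hj
  exact hmain (ee l - j) j hj rfl

omit hs ho in
lemma drop_mem_iff {x : ℕ} :
    x ∈ l.drop (ee l) ↔ ∃ i, ee l ≤ i ∧ i < l.length ∧ l.getD i 0 = x := by
  rw [List.mem_iff_getElem]
  constructor
  · rintro ⟨m, hm, hx⟩
    have hm' : ee l + m < l.length := by
      have := List.length_drop (i := ee l) (l := l)  -- length of drop
      omega
    refine ⟨ee l + m, by omega, hm', ?_⟩
    rw [List.getD_eq_getElem _ _ hm', ← hx, List.getElem_drop]
  · rintro ⟨i, hi1, hi2, hx⟩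
    have hm : i - ee l < (l.drop (ee l)).length := by
      rw [List.length_drop]; omega
    refine ⟨i - ee l, hm, ?_⟩
    rw [List.getElem_drop]
    rw [← List.getD_eq_getElem l 0 (by omega : ee l + (i - ee l) < l.length)]
    rw [show ee l + (i - ee l) = i from by omega]
    exact hx

include hs ho in
lemma cnt_one_iff {j : ℕ} :
    cnt l j = 1 ↔ (2*j+1) ∈ l.drop (ee l) := by
  constructor
  · intro hc
    have hne : ((Finset.Ico (ee l) l.length).filter fun i => l.getD i 0 = 2*j+1).Nonempty := by
      rw [← Finset.card_pos, ← cnt]; omega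
    obtain ⟨i, hi⟩ := hne
    rw [Finset.mem_filter, Finset.mem_Ico] at hi
    exact drop_mem_iff.2 ⟨i, hi.1.1, hi.1.2, hi.2⟩
  · intro hmem
    obtain ⟨i, hi1, hi2, hx⟩ := drop_mem_iff.1 hmem
    have h1 : 0 < cnt l j := by
      rw [cnt]
      refine Finset.card_pos.2 ⟨i, ?_⟩
      rw [Finset.mem_filter, Finset.mem_Ico]
      exact ⟨⟨hi1, hi2⟩, hx⟩
    have h2 := cnt_le_one hs (l := l) j
    omega

include hs ho in
lemma tail_fwd_eq_drop : tail' (fwd l) = l.drop (ee l) := by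
  have hflen : (fwd l).length = ee l := fwd_length hs ho
  have hmemiff : ∀ x, x ∈ tail' (fwd l) ↔ x ∈ l.drop (ee l) := by
    intro x
    rw [tail_mem]
    constructor
    · rintro ⟨i, hi, hev, hx⟩
      rw [hflen] at hi
      have := (fwd_parity hs ho hi).1 hev
      subst hx
      exact (cnt_one_iff hs ho).1 this
    · intro hmem
      have hxodd : Odd x := ho x (List.mem_of_mem_drop hmem)
      obtain ⟨i, hi1, hi2, hx⟩ := drop_mem_iff.1 hmem
      have hxlt : x < 2 * ee l + 1 := by
        have := small_tail hs ho hi1 hi2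
        omega
      rw [Nat.odd_iff] at hxodd
      have hxj : x = 2 * ((x-1)/2) + 1 := by omega
      refine ⟨(x-1)/2, ?_, ?_, hxj⟩
      · rw [hflen]; omega
      · apply (fwd_parity hs ho (by omega : (x-1)/2 < ee l)).2
        apply (cnt_one_iff hs ho).2
        rw [← hxj]
        exact hmem
  have hp1 : (tail' (fwd l)).Pairwise (· > ·) := tail_pairwise
  have hp2 : (l.drop (ee l)).Pairwise (· > ·) := hs.drop
  have hn1 : (tail' (fwd l)).Nodup := hp1.imp (fun h => Nat.ne_of_gt h)
  have hn2 : (l.drop (ee l)).Nodup := hp2.imp (fun h => Nat.ne_of_gt h)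
  have hperm : (tail' (fwd l)).Perm (l.drop (ee l)) := by
    rw [List.perm_iff_count]
    intro a
    rw [List.Nodup.count hn1, List.Nodup.count hn2]
    simp [hmemiff a]
  exact List.Perm.eq_of_pairwise (fun a b _ _ h1 h2 => by omega) hp1 hp2 hperm

include hs ho in
lemma bwd_fwd (hl : l ≠ []) : bwd (fwd l) = l := by
  have hLpos := fwd_pos_mem hs ho
  have hLgap := fwd_chain_gap hs ho
  have hLlast := fwd_getLast_ne hs ho hl
  have hflen : (fwd l).length = ee l := fwd_length hs ho
  have huu := uu_fwd_eq_tt hs ho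
  have htail := tail_fwd_eq_drop hs ho
  have hblen : (bwd (fwd l)).length = l.length := by
    rw [bwd, List.length_append, List.length_ofFn, htail, List.length_drop, hflen]
    have := ee_le l
    omega
  apply List.ext_getElem hblen
  intro k hk1 hk2
  rw [← List.getD_eq_getElem (bwd (fwd l)) 0 hk1, ← List.getD_eq_getElem l 0 hk2]
  rcases Nat.lt_or_ge k (ee l) with hke | hke
  · have hkL : k < (fwd l).length := by omega
    have h2 := bwd_getD_eq hLpos hLgap hLlast hkL
    have h1 := fwd_getD hs ho hke
    have h3 := huu k (by omega)
    have h4 := huu (k+1) (by omega)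
    rw [hflen] at h2
    omega
  · rw [bwd_getD_right hLpos hLgap hLlast (by omega : (fwd l).length ≤ k)]
    rw [htail, hflen]
    have hin : k - ee l < (l.drop (ee l)).length := by
      rw [List.length_drop]
      omega
    rw [List.getD_eq_getElem _ _ hin, List.getD_eq_getElem l 0 hk2, List.getElem_drop]
    congr 1
    omega

end RT1


def Aset (n : ℕ) : Set (Finset ℕ) := {P | (∀ a ∈ P, Odd a) ∧ ∑ a ∈ P, a = n}
def A'set (n : ℕ) : Set (List ℕ) := {l | l.Pairwise (· > ·) ∧ (∀ x ∈ l, Odd x) ∧ l.sum = n}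
def Bset (n : ℕ) : Set (List ℕ) := {L | (∀ h ∈ L, 1 ≤ h) ∧ L.Chain' (· ≥ ·) ∧
    L.getLast? ≠ some 2 ∧
    L.Chain' (fun a b => b + 6 ≤ a ∧ (Even b → b + 7 ≤ a)) ∧ L.sum = n}

def srt (P : Finset ℕ) : List ℕ := (P.sort (· ≤ ·)).reverse

lemma perm_of_nodup_mem {l1 l2 : List ℕ} (h1 : l1.Nodup) (h2 : l2.Nodup)
    (h : ∀ x, x ∈ l1 ↔ x ∈ l2) : l1.Perm l2 := by
  rw [List.perm_iff_count]
  intro a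
  rw [List.Nodup.count h1, List.Nodup.count h2]
  simp [h a]

lemma srt_mapsTo {n : ℕ} : Set.MapsTo srt (Aset n) (A'set n) := by
  intro P hP
  obtain ⟨hodd, hsum⟩ := hP
  refine ⟨?_, ?_, ?_⟩
  · rw [srt, List.pairwise_reverse]
    exact (Finset.sortedLT_sort P).pairwise
  · intro x hx
    rw [srt, List.mem_reverse, Finset.mem_sort] at hx
    exact hodd x hx
  · rw [srt, List.sum_reverse]
    rw [(Finset.sort_perm_toList P (· ≤ ·)).sum_eq]
    rw [show P.toList.sum = (P.toList.map id).sum by rw [List.map_id]]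
    rw [Finset.sum_map_toList]
    exact hsum

lemma toFinset_mapsTo {n : ℕ} : Set.MapsTo List.toFinset (A'set n) (Aset n) := by
  intro l hl
  obtain ⟨hs, ho, hsum⟩ := hl
  have hnodup : l.Nodup := hs.imp (fun h => Nat.ne_of_gt h)
  refine ⟨?_, ?_⟩
  · intro a ha
    rw [List.mem_toFinset] at ha
    exact ho a ha
  · rw [show (∑ a ∈ l.toFinset, a) = l.toFinset.sum id from rfl]
    rw [List.sum_toFinset _ hnodup, List.map_id]
    exact hsum

lemma srt_left_inv {n : ℕ} : ∀ P ∈ Aset n, (srt P).toFinset = P := by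
  intro P _
  rw [srt, List.toFinset_reverse, Finset.sort_toFinset]

lemma srt_right_inv {n : ℕ} : ∀ l ∈ A'set n, srt l.toFinset = l := by
  intro l hl
  obtain ⟨hs, ho, hsum⟩ := hl
  have hnodup : l.Nodup := hs.imp (fun h => Nat.ne_of_gt h)
  have hperm : (l.toFinset.sort (· ≤ ·)).Perm l := by
    apply perm_of_nodup_mem (Finset.sort_nodup _ _) hnodup
    intro x
    rw [Finset.mem_sort, List.mem_toFinset]
  have hsorted1 : (l.toFinset.sort (· ≤ ·)).Pairwise (· ≤ ·) := Finset.pairwise_sort _ _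
  have hsorted2 : l.reverse.Pairwise (· ≤ ·) := by
    rw [List.pairwise_reverse]
    exact hs.imp (fun h => le_of_lt h)
  have heq : l.toFinset.sort (· ≤ ·) = l.reverse :=
    List.Perm.eq_of_pairwise' hsorted1 hsorted2 (hperm.trans (List.reverse_perm l).symm)
  rw [srt, heq, List.reverse_reverse]

lemma fwd_mapsTo {n : ℕ} (hn : 0 < n) : Set.MapsTo fwd (A'set n) (Bset n) := by
  intro l hl
  obtain ⟨hs, ho, hsum⟩ := hl
  have hne : l ≠ [] := by
    intro hcon
    rw [hcon] at hsum
    simp at hsum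
    omega
  refine ⟨fwd_pos_mem hs ho, fwd_chain_ge hs ho, fwd_getLast_ne hs ho hne,
    fwd_chain_gap hs ho, ?_⟩
  rw [fwd_sum hs ho]
  exact hsum

lemma bwd_mapsTo {n : ℕ} : Set.MapsTo bwd (Bset n) (A'set n) := by
  intro L hL
  obtain ⟨hLpos, _, hLlast, hLgap, hsum⟩ := hL
  refine ⟨bwd_pairwise hLpos hLgap hLlast, bwd_odd_mem hLpos hLgap hLlast, ?_⟩
  rw [bwd_sum hLpos hLgap hLlast]
  exact hsum

lemma fwd_bijOn {n : ℕ} (hn : 0 < n) : Set.BijOn fwd (A'set n) (Bset n) := by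
  apply Set.InvOn.bijOn (f' := bwd) ?_ (fwd_mapsTo hn) bwd_mapsTo
  constructor
  · intro l hl
    obtain ⟨hs, ho, hsum⟩ := hl
    have hne : l ≠ [] := by
      intro hcon
      rw [hcon] at hsum
      simp at hsum
      omega
    exact bwd_fwd hs ho hne
  · intro L hL
    obtain ⟨hLpos, _, hLlast, hLgap, _⟩ := hL
    exact fwd_bwd hLpos hLgap hLlast

lemma srt_bijOn {n : ℕ} : Set.BijOn srt (Aset n) (A'set n) := by
  apply Set.InvOn.bijOn (f' := List.toFinset) ?_ srt_mapsTo toFinset_mapsTo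
  exact ⟨srt_left_inv, srt_right_inv⟩

lemma ncard_eq_of_bijOn {α β : Type*} {s : Set α} {t : Set β} {f : α → β}
    (h : Set.BijOn f s t) : s.ncard = t.ncard := by
  rw [← h.image_eq, Set.ncard_image_of_injOn h.injOn]

end AlladiBij

/-- Alladi's identity. The number of partitions of `n` into distinct odd
parts equals the number of partitions `n = h₁ + ⋯ + h_d` with `h₁ ≥ ⋯ ≥ h_d ≥ 1`,
`h_d ≠ 2`, `h_i - h_{i+1} ≥ 6`, and `h_i - h_{i+1} ≥ 7` whenever `h_{i+1}` is even.
Partitions of the first kind are encoded as finite sets of odd positive integers summing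
to `n`; partitions of the second kind as the corresponding weakly decreasing lists. -/
theorem distinct_odd_parts_eq_gap_partitions (n : ℕ) (hn : 0 < n) :
    {P : Finset ℕ | (∀ a ∈ P, Odd a) ∧ ∑ a ∈ P, a = n}.ncard =
    {L : List ℕ | (∀ h ∈ L, 1 ≤ h) ∧ L.Chain' (· ≥ ·) ∧
      L.getLast? ≠ some 2 ∧
      L.Chain' (fun a b => b + 6 ≤ a ∧ (Even b → b + 7 ≤ a)) ∧
      L.sum = n}.ncard := by
  have h1 := AlladiBij.ncard_eq_of_bijOn (AlladiBij.srt_bijOn (n := n))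
  have h2 := AlladiBij.ncard_eq_of_bijOn (AlladiBij.fwd_bijOn (n := n) hn)
  exact h1.trans h2
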